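/- For each n, the map I ↦ (number of nondecreasing parking functions of length n with packed evaluation I) is invariant under conjugation-reversal symmetry: the number of π ∈ NDPFₙ with packed evaluation I equals the number with packed evaluation Ĩ (the conjugate composition of the reversed composition). -/

import Mathlib

/-- The break set of a word `π : Fin n → Fin n` (positions `k ∈ {1,…,n−1}` where
`π_{k} ≠ π_{k+1}`, 1-indexed; 0-indexed, `0 < k` and `π (k-1) ≠ π k`).
For a nondecreasing parking function this is the descent set of its packed
evaluation, regarded as a composition of `n`. -/
def breakSet {n : ℕ} [NeZero n] (π : Fin n → Fin n) : Finset (Fin n) :=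
  Finset.univ.filter (fun k => 0 < k ∧ π (k - 1) ≠ π k)

/-!
An NDPF `π` with break set `D` is determined by its set `V` of nonzero values, through
`π j ≤ t ↔ #(D ∩ [0, j]) ≤ #(V ∩ [0, t])`. The sets `V` that occur are exactly the sets of
positive elements with `#V = #D` whose counting function dominates that of `D`: dominance at
`t = j` is the parking condition `π j ≤ j`.

Complement-reversal `X ↦ {k > 0 | n - k ∉ X}` sends the counting function of `X` at `s` to
`s - #X + #(X ∩ [0, n - 1 - s])`, so for `#V = #D` it preserves dominance. Hence it maps the value
sets for `D` injectively to those for the conjugate of `D`, and since it is an involution the two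
counts agree.
-/

open Finset

namespace Fin

variable {n : ℕ} [NeZero n]

theorem val_sub_one_of_pos {k : Fin n} (hk : 0 < k) : ((k - 1 : Fin n) : ℕ) = k - 1 := by
  have hk' : 0 < (k : ℕ) := hk
  have h1 : ((1 : Fin n) : ℕ) = 1 := by rw [val_one', Nat.mod_eq_of_lt (by omega)]
  rw [sub_val_of_le (by rw [le_def, h1]; omega), h1]

theorem le_sub_one_iff_lt {j k : Fin n} (hk : 0 < k) : j ≤ k - 1 ↔ j < k := by
  have hk' : 0 < (k : ℕ) := hk
  rw [le_def, lt_def, val_sub_one_of_pos hk]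
  omega

theorem sub_one_lt_of_pos {k : Fin n} (hk : 0 < k) : k - 1 < k :=
  (le_sub_one_iff_lt hk).1 le_rfl

theorem rev_lt_neg_iff {s k : Fin n} : rev s < -k ↔ 0 < k ∧ k ≤ s := by
  rw [lt_def, lt_def, le_def, val_neg, val_rev, val_zero]
  split_ifs with hk
  · simp [hk]
  · have := (pos_iff_ne_zero' k).2 hk
    have := k.isLt
    omega

end Fin

section CountLE

variable {α : Type*} [LinearOrder α]

def countLE (X : Finset α) (t : α) : ℕ := #{x ∈ X | x ≤ t}

theorem countLE_mono (X : Finset α) : Monotone (countLE X) := fun _ _ hst =>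
  card_le_card fun _ hx => by
    rw [mem_filter] at hx ⊢
    exact ⟨hx.1, hx.2.trans hst⟩

theorem countLE_lt_countLE {X : Finset α} {s t : α} (hs : s ∈ X) (hts : t < s) :
    countLE X t < countLE X s := by
  refine card_lt_card ⟨fun _ hx => ?_, fun h => ?_⟩
  · rw [mem_filter] at hx ⊢
    exact ⟨hx.1, hx.2.trans hts.le⟩
  · exact hts.not_ge (mem_filter.1 (h (mem_filter.2 ⟨hs, le_rfl⟩))).2

theorem card_filter_lt_add_countLE (X : Finset α) (t : α) :
    #{x ∈ X | t < x} + countLE X t = #X := by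
  simpa only [countLE, not_lt] using card_filter_add_card_filter_not (s := X) (t < ·)

theorem countLE_eq_zero_of_forall_lt {X : Finset α} {t : α} (h : ∀ x ∈ X, t < x) :
    countLE X t = 0 :=
  card_eq_zero.2 <| filter_eq_empty_iff.2 fun x hx => not_le.2 (h x hx)

end CountLE

variable {n : ℕ} [NeZero n]

theorem countLE_eq_countLE_sub_one_add {X : Finset (Fin n)} {k : Fin n} (hk : 0 < k) :
    countLE X k = countLE X (k - 1) + if k ∈ X then 1 else 0 := by
  have hsplit : {x ∈ X | x ≤ k} = {x ∈ X | x ≤ k - 1} ∪ {x ∈ X | x = k} := by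
    ext x
    simp only [mem_union, mem_filter, Fin.le_sub_one_iff_lt hk, le_iff_lt_or_eq]
    tauto
  have hdisj : Disjoint {x ∈ X | x ≤ k - 1} {x ∈ X | x = k} :=
    disjoint_filter.2 fun x _ hx hxk => (Fin.sub_one_lt_of_pos hk).not_ge (hxk ▸ hx)
  rw [countLE, hsplit, card_union_of_disjoint hdisj, filter_eq', apply_ite card, card_singleton,
    card_empty]
  rfl

theorem mem_breakSet {π : Fin n → Fin n} {k : Fin n} :
    k ∈ breakSet π ↔ 0 < k ∧ π (k - 1) ≠ π k := by
  simp [breakSet]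

theorem apply_mem_insert_image_breakSet (π : Fin n → Fin n) (j : Fin n) :
    π j ∈ insert (π 0) ((breakSet π).image π) := by
  induction hj : (j : ℕ) generalizing j with
  | zero => simp [show j = 0 from Fin.ext hj]
  | succ m ih =>
    by_cases hjB : j ∈ breakSet π
    · exact mem_insert_of_mem (mem_image_of_mem π hjB)
    · have hj0 : 0 < j := by rw [Fin.lt_def, Fin.val_zero]; omega
      have hprev : π (j - 1) = π j := by simpa [mem_breakSet, hj0] using hjB
      rw [← hprev]
      exact ih _ (by rw [Fin.val_sub_one_of_pos hj0]; omega)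

theorem Monotone.lt_of_mem_breakSet {π : Fin n → Fin n} (hπ : Monotone π) {j k : Fin n}
    (hk : k ∈ breakSet π) (hjk : j < k) : π j < π k := by
  obtain ⟨hk0, hne⟩ := mem_breakSet.1 hk
  exact (hπ ((Fin.le_sub_one_iff_lt hk0).2 hjk)).trans_lt
    ((hπ (Fin.sub_one_lt_of_pos hk0).le).lt_of_ne hne)

theorem Monotone.strictMonoOn_breakSet {π : Fin n → Fin n} (hπ : Monotone π) :
    StrictMonoOn π (breakSet π) :=
  fun _ _ _ hb hab => hπ.lt_of_mem_breakSet hb hab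

def valueSet (π : Fin n → Fin n) : Finset (Fin n) := (breakSet π).image π

theorem Monotone.countLE_valueSet {π : Fin n → Fin n} (hπ : Monotone π) (j : Fin n) :
    countLE (valueSet π) (π j) = countLE (breakSet π) j := by
  have hfilter : {k ∈ breakSet π | π k ≤ π j} = {k ∈ breakSet π | k ≤ j} :=
    filter_congr fun k hk =>
      ⟨fun h => not_lt.1 fun hjk => (hπ.lt_of_mem_breakSet hk hjk).not_ge h, fun h => hπ h⟩
  rw [countLE, valueSet, filter_image, hfilter, card_image_of_injOn
    (hπ.strictMonoOn_breakSet.injOn.mono (filter_subset _ _))]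
  rfl

theorem Monotone.le_iff_countLE_le {π : Fin n → Fin n} (hπ : Monotone π) (h0 : π 0 = 0)
    (j t : Fin n) : π j ≤ t ↔ countLE (breakSet π) j ≤ countLE (valueSet π) t := by
  rw [← hπ.countLE_valueSet]
  refine ⟨fun h => countLE_mono _ h, fun h => not_lt.1 fun htj => h.not_gt ?_⟩
  rcases mem_insert.1 (apply_mem_insert_image_breakSet π j) with hj | hj
  · rw [hj, h0] at htj
    exact absurd htj (Fin.not_lt_zero t)
  · exact countLE_lt_countLE hj htj

def IsNDPF (π : Fin n → Fin n) : Prop := Monotone π ∧ ∀ i, π i ≤ i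

structure IsValueSet (D V : Finset (Fin n)) : Prop where
  pos : ∀ v ∈ V, 0 < v
  card_eq : #V = #D
  countLE_le : ∀ t, countLE D t ≤ countLE V t

theorem IsNDPF.apply_zero {π : Fin n → Fin n} (hπ : IsNDPF π) : π 0 = 0 :=
  le_antisymm (hπ.2 0) (Fin.zero_le _)

theorem IsNDPF.isValueSet {π : Fin n → Fin n} (hπ : IsNDPF π) :
    IsValueSet (breakSet π) (valueSet π) where
  pos := by
    intro v hv
    obtain ⟨k, hk, rfl⟩ := mem_image.1 hv
    rw [← hπ.apply_zero]
    exact hπ.1.lt_of_mem_breakSet hk (mem_breakSet.1 hk).1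
  card_eq := card_image_of_injOn hπ.1.strictMonoOn_breakSet.injOn
  countLE_le t := (hπ.1.le_iff_countLE_le hπ.apply_zero t t).1 (hπ.2 t)

namespace IsValueSet

variable {D V : Finset (Fin n)}

def ndpf (hV : IsValueSet D V) (j : Fin n) : Fin n :=
  ({t | countLE D j ≤ countLE V t} : Finset (Fin n)).min'
    ⟨j, mem_filter.2 ⟨mem_univ j, hV.countLE_le j⟩⟩

theorem countLE_le_countLE_ndpf (hV : IsValueSet D V) (j : Fin n) :
    countLE D j ≤ countLE V (hV.ndpf j) :=
  (mem_filter.1 (min'_mem {t | countLE D j ≤ countLE V t} _)).2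

theorem ndpf_le_iff (hV : IsValueSet D V) (j t : Fin n) :
    hV.ndpf j ≤ t ↔ countLE D j ≤ countLE V t :=
  ⟨fun h => (hV.countLE_le_countLE_ndpf j).trans (countLE_mono V h),
    fun h => min'_le _ _ (mem_filter.2 ⟨mem_univ t, h⟩)⟩

theorem isNDPF_ndpf (hV : IsValueSet D V) : IsNDPF hV.ndpf :=
  ⟨fun i j hij => (hV.ndpf_le_iff i _).2 <|
      (countLE_mono D hij).trans (hV.countLE_le_countLE_ndpf j),
    fun j => (hV.ndpf_le_iff j j).2 (hV.countLE_le j)⟩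

theorem ndpf_eq_of_countLE_eq (hV : IsValueSet D V) {i j : Fin n}
    (h : countLE D i = countLE D j) : hV.ndpf i = hV.ndpf j :=
  eq_of_forall_ge_iff fun t => by rw [ndpf_le_iff, ndpf_le_iff, h]

theorem ndpf_pos (hV : IsValueSet D V) {j : Fin n} (hj : 0 < countLE D j) : 0 < hV.ndpf j := by
  rw [Fin.pos_iff_ne_zero']
  intro h0
  have := (hV.ndpf_le_iff j 0).1 h0.le
  rw [countLE_eq_zero_of_forall_lt hV.pos] at this
  omega

theorem countLE_sub_one_lt (hV : IsValueSet D V) {j : Fin n} (hj : 0 < hV.ndpf j) :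
    countLE V (hV.ndpf j - 1) < countLE D j := by
  rw [← not_le, ← ndpf_le_iff]
  exact (Fin.sub_one_lt_of_pos hj).not_ge

theorem ndpf_mem (hV : IsValueSet D V) {j : Fin n} (hj : 0 < countLE D j) : hV.ndpf j ∈ V := by
  have hu := hV.ndpf_pos hj
  by_contra hmem
  have hjump := countLE_eq_countLE_sub_one_add (X := V) hu
  rw [if_neg hmem] at hjump
  have := hV.countLE_sub_one_lt hu
  have := hV.countLE_le_countLE_ndpf j
  omega

theorem breakSet_ndpf (hD : ∀ k ∈ D, 0 < k) (hV : IsValueSet D V) : breakSet hV.ndpf = D := by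
  ext k
  rw [mem_breakSet]
  constructor
  · rintro ⟨hk, hne⟩
    by_contra hkD
    have hjump := countLE_eq_countLE_sub_one_add (X := D) hk
    rw [if_neg hkD, add_zero] at hjump
    exact hne (hV.ndpf_eq_of_countLE_eq hjump.symm)
  · intro hkD
    have hk := hD k hkD
    refine ⟨hk, fun heq => ?_⟩
    have hjumpD := countLE_eq_countLE_sub_one_add (X := D) hk
    rw [if_pos hkD] at hjumpD
    have hu := hV.ndpf_pos (j := k) (by omega)
    have hlt := hV.countLE_sub_one_lt (j := k - 1) (heq ▸ hu)
    rw [heq] at hlt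
    have hle := hV.countLE_le_countLE_ndpf k
    have hjumpV := countLE_eq_countLE_sub_one_add (X := V) hu
    split_ifs at hjumpV <;> omega

theorem valueSet_ndpf (hD : ∀ k ∈ D, 0 < k) (hV : IsValueSet D V) : valueSet hV.ndpf = V := by
  have hB := hV.breakSet_ndpf hD
  refine eq_of_subset_of_card_le ?_ ?_
  · intro v hv
    obtain ⟨k, hk, rfl⟩ := mem_image.1 hv
    rw [hB] at hk
    exact hV.ndpf_mem (card_pos.2 ⟨k, mem_filter.2 ⟨hk, le_rfl⟩⟩)
  · rw [valueSet, card_image_of_injOn hV.isNDPF_ndpf.1.strictMonoOn_breakSet.injOn, hB,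
      hV.card_eq]

end IsValueSet

def ndpfEquivValueSet {D : Finset (Fin n)} (hD : ∀ k ∈ D, 0 < k) :
    {π : Fin n → Fin n // IsNDPF π ∧ breakSet π = D} ≃ {V // IsValueSet D V} where
  toFun π := ⟨valueSet π.1, by
    have := π.2.1.isValueSet; rwa [π.2.2] at this⟩
  invFun V := ⟨V.2.ndpf, V.2.isNDPF_ndpf, V.2.breakSet_ndpf hD⟩
  left_inv π := Subtype.ext <| funext fun j => eq_of_forall_ge_iff fun t => by
    rw [IsValueSet.ndpf_le_iff, π.2.1.1.le_iff_countLE_le π.2.1.apply_zero, π.2.2]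
  right_inv V := Subtype.ext (V.2.valueSet_ndpf hD)

def conjugateDescentSet (X : Finset (Fin n)) : Finset (Fin n) :=
  (univ.filter (fun k : Fin n => 0 < k)) \ X.image (fun k => -k)

theorem mem_conjugateDescentSet {X : Finset (Fin n)} {k : Fin n} :
    k ∈ conjugateDescentSet X ↔ 0 < k ∧ -k ∉ X := by
  simp [conjugateDescentSet, neg_eq_iff_eq_neg]

theorem pos_of_mem_conjugateDescentSet {X : Finset (Fin n)} {k : Fin n}
    (hk : k ∈ conjugateDescentSet X) : 0 < k :=
  (mem_conjugateDescentSet.1 hk).1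

theorem countLE_conjugateDescentSet_add (X : Finset (Fin n)) (s : Fin n) :
    countLE (conjugateDescentSet X) s + #{x ∈ X | Fin.rev s < x} = s := by
  have hnot : {k ∈ Ioc 0 s | -k ∉ X} = {k ∈ conjugateDescentSet X | k ≤ s} := by
    ext k
    simp only [mem_filter, mem_Ioc, mem_conjugateDescentSet]
    tauto
  have hmem : #{k ∈ Ioc 0 s | -k ∈ X} = #{x ∈ X | Fin.rev s < x} := by
    refine card_nbij' (- ·) (- ·) ?_ ?_ (fun k _ => neg_neg k) (fun x _ => neg_neg x)
    · intro k hk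
      simp only [coe_filter, mem_Ioc, Set.mem_ofPred_eq] at hk ⊢
      exact ⟨hk.2, Fin.rev_lt_neg_iff.2 hk.1⟩
    · intro x hx
      simp only [coe_filter, mem_Ioc, Set.mem_ofPred_eq] at hx ⊢
      rw [← Fin.rev_lt_neg_iff, neg_neg]
      exact ⟨hx.2, hx.1⟩
  have := card_filter_add_card_filter_not (s := Ioc 0 s) (fun k => -k ∈ X)
  rw [Fin.card_Ioc, Fin.val_zero, Nat.sub_zero, hmem, hnot] at this
  rw [countLE, ← this, add_comm]

theorem card_conjugateDescentSet_add {X : Finset (Fin n)} (hX : ∀ x ∈ X, 0 < x) :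
    #(conjugateDescentSet X) + #X = n - 1 := by
  have := countLE_conjugateDescentSet_add X ⊤
  rwa [countLE, filter_true_of_mem fun _ _ => le_top, ← Fin.rev_zero_eq_top, Fin.rev_rev,
    filter_true_of_mem hX, Fin.rev_zero_eq_top, Fin.val_top] at this

theorem conjugateDescentSet_conjugateDescentSet {X : Finset (Fin n)} (hX : ∀ x ∈ X, 0 < x) :
    conjugateDescentSet (conjugateDescentSet X) = X := by
  ext k
  simp only [mem_conjugateDescentSet, neg_neg, not_and, not_not]
  refine ⟨fun ⟨hk, h⟩ => h ?_, fun hk => ⟨hX k hk, fun _ => hk⟩⟩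
  rw [Fin.pos_iff_ne_zero'] at hk ⊢
  exact neg_ne_zero.2 hk

theorem IsValueSet.conjugateDescentSet {D V : Finset (Fin n)} (hD : ∀ k ∈ D, 0 < k)
    (hV : IsValueSet D V) : IsValueSet (conjugateDescentSet D) (conjugateDescentSet V) where
  pos _ := pos_of_mem_conjugateDescentSet
  card_eq := by
    have := card_conjugateDescentSet_add hD
    have := card_conjugateDescentSet_add hV.pos
    have := hV.card_eq
    omega
  countLE_le s := by
    have := countLE_conjugateDescentSet_add D s
    have := countLE_conjugateDescentSet_add V s
    have := card_filter_lt_add_countLE D (Fin.rev s)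
    have := card_filter_lt_add_countLE V (Fin.rev s)
    have := hV.countLE_le (Fin.rev s)
    have := hV.card_eq
    omega

theorem card_isValueSet_le_conjugateDescentSet {D : Finset (Fin n)} (hD : ∀ k ∈ D, 0 < k) :
    Nat.card {V // IsValueSet D V} ≤ Nat.card {V // IsValueSet (conjugateDescentSet D) V} := by
  refine Nat.card_le_card_of_injective (fun V => ⟨_, V.2.conjugateDescentSet hD⟩) ?_
  intro V W h
  have := congrArg (conjugateDescentSet ∘ Subtype.val) h
  simp only [Function.comp_apply, conjugateDescentSet_conjugateDescentSet V.2.pos,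
    conjugateDescentSet_conjugateDescentSet W.2.pos] at this
  exact Subtype.ext this

theorem card_isValueSet_conjugateDescentSet {D : Finset (Fin n)} (hD : ∀ k ∈ D, 0 < k) :
    Nat.card {V // IsValueSet (conjugateDescentSet D) V} = Nat.card {V // IsValueSet D V} := by
  refine le_antisymm ?_ (card_isValueSet_le_conjugateDescentSet hD)
  have := card_isValueSet_le_conjugateDescentSet (D := conjugateDescentSet D)
    fun _ => pos_of_mem_conjugateDescentSet
  rwa [conjugateDescentSet_conjugateDescentSet hD] at this

/-- Compositions of `n` are encoded by their descent sets, as subsets of the nonzero elements of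
`Fin n`; in `Fin n`, `-k = n - k`. -/
theorem ndpf_packed_evaluation_symmetry (n : ℕ) [NeZero n] (D : Finset (Fin n))
    (hD : ∀ k ∈ D, 0 < k) :
    Nat.card {π : Fin n → Fin n //
      ((∀ i j : Fin n, i ≤ j → π i ≤ π j) ∧ ∀ i : Fin n, (π i : ℕ) ≤ (i : ℕ)) ∧
      breakSet π = D} =
    Nat.card {π : Fin n → Fin n //
      ((∀ i j : Fin n, i ≤ j → π i ≤ π j) ∧ ∀ i : Fin n, (π i : ℕ) ≤ (i : ℕ)) ∧
      breakSet π =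
        (Finset.univ.filter (fun k : Fin n => 0 < k)) \ (D.image (fun k => -k))} :=
  calc _ = Nat.card {V // IsValueSet D V} := Nat.card_congr (ndpfEquivValueSet hD)
    _ = Nat.card {V // IsValueSet (conjugateDescentSet D) V} :=
      (card_isValueSet_conjugateDescentSet hD).symm
    _ = _ := (Nat.card_congr (ndpfEquivValueSet fun _ => pos_of_mem_conjugateDescentSet)).symm
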